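/- If m⃗ ≠ (0,…,0) and (n, m⃗) is weakly normal for the associated system (rank H^t_{n,m⃗} = 2m with c^j_l = a^j_{|l|}/2), then the linear Hermite–Chebyshev approximations are uniquely determined: for any two solutions (u, v^1,…,v^k) and (u′, v′^1,…,v′^k) of Problem A^ch one has the polynomial identities (∑_{p=0}^{n_j} v^j_p T_p)·(∑_{q=0}^m u′_q T_q) = (∑_{p=0}^{n_j} v′^j_p T_p)·(∑_{q=0}^m u_q T_q) for every j = 1,…,k. -/
import Mathlib


open Finset

/-- A solution of Problem `A^ch` for `(n, m⃗)` and the system of Chebyshev series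
`f^ch_j = a^j_0/2 + ∑_{l≥1} a^j_l T_l` : a vector `u = (u_0, …, u_m)` not all zero
(encoded as `u : ℕ → ℂ` vanishing above `m`) and vectors `v^j = (v^j_0, …, v^j_{n_j})`
(encoded as `v j : ℕ → ℂ` vanishing above `n_j`), such that for every `j` :
`∑_{p=0}^m u_p (a^j_{|l−p|} + a^j_{l+p}) = 0` for `n_j < l ≤ n+m`, and `v^j_l` equals
the `l`-th Chebyshev coefficient of `Q·f^ch_j` for `0 ≤ l ≤ n_j`, i.e.
`v^j_l = (1/2)∑_{p=0}^m u_p (a^j_{|l−p|} + a^j_{l+p})` for `1 ≤ l ≤ n_j` and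
`v^j_0 = (1/2)∑_{p=0}^m u_p a^j_p`. -/
def IsChebSolution {k : ℕ} (a : Fin k → ℕ → ℝ) (n : ℕ) (mv : Fin k → ℕ)
    (u : ℕ → ℂ) (v : Fin k → ℕ → ℂ) : Prop :=
  u ≠ 0 ∧ (∀ p : ℕ, (∑ i, mv i) < p → u p = 0) ∧
  (∀ (j : Fin k) (l : ℕ), n + (∑ i, mv i) - mv j < l → l ≤ n + ∑ i, mv i →
    ∑ p ∈ Finset.range ((∑ i, mv i) + 1),
      u p * (((a j ((l : ℤ) - p).natAbs : ℝ) : ℂ) + ((a j (l + p) : ℝ) : ℂ)) = 0) ∧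
  (∀ j : Fin k, v j 0 = (1 / 2) * ∑ p ∈ Finset.range ((∑ i, mv i) + 1),
      u p * ((a j p : ℝ) : ℂ)) ∧
  (∀ (j : Fin k) (l : ℕ), 1 ≤ l → l ≤ n + (∑ i, mv i) - mv j →
    v j l = (1 / 2) * ∑ p ∈ Finset.range ((∑ i, mv i) + 1),
      u p * (((a j ((l : ℤ) - p).natAbs : ℝ) : ℂ) + ((a j (l + p) : ℝ) : ℂ))) ∧
  (∀ (j : Fin k) (l : ℕ), n + (∑ i, mv i) - mv j < l → v j l = 0)

/-- The associated bilateral sequence `c^j_l = a^j_{|l|}/2`. -/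
noncomputable def chebC {k : ℕ} (a : Fin k → ℕ → ℝ) (j : Fin k) (l : ℤ) : ℂ :=
  ((a j l.natAbs / 2 : ℝ) : ℂ)

/-- The `(2m) × (2m+1)` matrix `H^t_{n,m⃗}` associated with the sequences
`c^j_l = a^j_{|l|}/2` : columns indexed by `p = q − m ∈ {−m, …, m}`, rows indexed by
the pairs `(j, l)` with `m_j ≥ 1`,
`l ∈ {−(n_j+m_j), …, −(n_j+1)} ∪ {n_j+1, …, n_j+m_j}`, entries `c^j_{l−p}`. -/
noncomputable def chebHMatrix {k : ℕ} (a : Fin k → ℕ → ℝ) (n : ℕ) (mv : Fin k → ℕ) :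
    Matrix ((Σ j : Fin k, Fin (mv j)) ⊕ (Σ j : Fin k, Fin (mv j)))
      (Fin (2 * (∑ i, mv i) + 1)) ℂ :=
  fun r q =>
    match r with
    | Sum.inl ⟨j, i⟩ =>
        chebC a j ((((n + (∑ i', mv i') - mv j : ℕ) : ℤ) + 1 + (i : ℤ)) -
          ((q : ℤ) - ((∑ i', mv i' : ℕ) : ℤ)))
    | Sum.inr ⟨j, i⟩ =>
        chebC a j ((-(((n + (∑ i', mv i') - mv j : ℕ) : ℤ) + 1 + (i : ℤ))) -
          ((q : ℤ) - ((∑ i', mv i' : ℕ) : ℤ)))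

noncomputable def mkU (m : ℕ) (u : ℕ → ℂ) : Fin (2*m+1) → ℂ :=
  fun q => (if (q:ℤ) = (m:ℤ) then 2 else 1) * u ((q:ℤ) - (m:ℤ)).natAbs

lemma key_sum (m : ℕ) (u : ℕ → ℂ) (c : ℤ → ℂ) (L : ℤ) :
    ∑ q : Fin (2*m+1), c (L - ((q:ℤ) - (m:ℤ))) * mkU m u q
    = ∑ p ∈ Finset.range (m+1), u p * (c (L - (p:ℤ)) + c (L + (p:ℤ))) := by
  simp only [mkU]
  rw [Fin.sum_univ_eq_sum_range
    (fun q : ℕ => c (L - ((q:ℤ) - (m:ℤ))) * ((if (q:ℤ) = (m:ℤ) then 2 else 1) * u ((q:ℤ) - (m:ℤ)).natAbs))]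
  have hsplit : 2*m+1 = m + (m+1) := by ring
  rw [hsplit, Finset.sum_range_add]
  rw [← Finset.sum_range_reflect]
  have h1 : ∑ p ∈ Finset.range m,
      c (L - (((m - 1 - p : ℕ):ℤ) - (m:ℤ))) * ((if ((m-1-p : ℕ):ℤ) = (m:ℤ) then 2 else 1) * u (((m-1-p:ℕ):ℤ) - (m:ℤ)).natAbs)
      = ∑ p ∈ Finset.range m, c (L + ((p:ℤ)+1)) * u (p+1) := by
    apply Finset.sum_congr rfl
    intro p hp
    have hpm : p < m := Finset.mem_range.mp hp
    have e1 : ((m-1-p : ℕ):ℤ) - (m:ℤ) = -((p:ℤ)+1) := by omega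
    have e2 : ((m-1-p : ℕ):ℤ) ≠ (m:ℤ) := by omega
    rw [e1, if_neg e2]
    have e3 : (-((p:ℤ)+1)).natAbs = p+1 := by omega
    rw [e3]
    ring_nf
  rw [h1]
  have h2 : ∑ p ∈ Finset.range (m+1),
      c (L - (((m + p : ℕ):ℤ) - (m:ℤ))) * ((if ((m+p : ℕ):ℤ) = (m:ℤ) then 2 else 1) * u (((m+p:ℕ):ℤ) - (m:ℤ)).natAbs)
      = ∑ p ∈ Finset.range (m+1), c (L - (p:ℤ)) * ((if p = 0 then 2 else 1) * u p) := by
    apply Finset.sum_congr rfl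
    intro p hp
    have e1 : ((m+p : ℕ):ℤ) - (m:ℤ) = (p:ℤ) := by omega
    have e2 : (((m+p : ℕ):ℤ) = (m:ℤ)) = (p = 0) := by
      simp only [eq_iff_iff]; omega
    rw [e1]
    simp only [e2, Int.natAbs_natCast]
  rw [h2]
  rw [Finset.sum_range_succ' (fun p => u p * (c (L - (p:ℤ)) + c (L + (p:ℤ)))) m,
      Finset.sum_range_succ' (fun p => c (L - (p:ℤ)) * ((if p = 0 then 2 else 1) * u p)) m]
  simp only [Nat.succ_ne_zero, if_false, if_true, mul_add, Finset.sum_add_distrib,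
    Nat.cast_zero, sub_zero, add_zero, Nat.cast_add, Nat.cast_one]
  have e4 : ∑ x ∈ Finset.range m, c (L - ((x:ℤ)+1)) * (1 * u (x+1))
      = ∑ x ∈ Finset.range m, u (x+1) * c (L - ((x:ℤ)+1)) :=
    Finset.sum_congr rfl (fun x _ => by ring)
  have e5 : ∑ x ∈ Finset.range m, c (L + ((x:ℤ)+1)) * u (x+1)
      = ∑ x ∈ Finset.range m, u (x+1) * c (L + ((x:ℤ)+1)) :=
    Finset.sum_congr rfl (fun x _ => by ring)
  rw [e4, e5]
  ring

lemma mkU_rev (m : ℕ) (u : ℕ → ℂ) (q : Fin (2*m+1)) : mkU m u q.rev = mkU m u q := by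
  have hq : (q:ℕ) < 2*m+1 := q.isLt
  have h1 : ((q.rev : Fin (2*m+1)) : ℕ) = 2*m - (q:ℕ) := by rw [Fin.val_rev]; omega
  simp only [mkU, h1]
  have h2 : ((2*m - (q:ℕ) : ℕ) : ℤ) - (m:ℤ) = -(((q:ℕ):ℤ) - (m:ℤ)) := by omega
  have h3 : (((2*m - (q:ℕ) : ℕ) : ℤ) = (m:ℤ)) = ((((q:ℕ)):ℤ) = (m:ℤ)) := by
    simp only [eq_iff_iff]; omega
  rw [h2]; simp only [h3, Int.natAbs_neg]

lemma key_sum_neg (m : ℕ) (u : ℕ → ℂ) (c : ℤ → ℂ) (L : ℤ) (hsym : ∀ x, c (-x) = c x) :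
    ∑ q : Fin (2*m+1), c (-L - ((q:ℤ) - (m:ℤ))) * mkU m u q
    = ∑ q : Fin (2*m+1), c (L - ((q:ℤ) - (m:ℤ))) * mkU m u q := by
  rw [← Equiv.sum_comp (Fin.revPerm) (fun q : Fin (2*m+1) => c (L - ((q:ℤ) - (m:ℤ))) * mkU m u q)]
  apply Finset.sum_congr rfl
  intro q _
  simp only [Fin.revPerm_apply]
  rw [mkU_rev]
  congr 1
  have hq : (q:ℕ) < 2*m+1 := q.isLt
  have h1 : ((q.rev : Fin (2*m+1)) : ℕ) = 2*m - (q:ℕ) := by rw [Fin.val_rev]; omega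
  rw [h1]
  have h2 : -L - (((q:ℕ):ℤ) - (m:ℤ)) = -(L - (((2*m - (q:ℕ) : ℕ) : ℤ) - (m:ℤ))) := by omega
  rw [h2, hsym]

lemma mkU_ne_zero (m : ℕ) (u : ℕ → ℂ) (hu : u ≠ 0) (hv : ∀ p, m < p → u p = 0) :
    mkU m u ≠ 0 := by
  obtain ⟨p, hp⟩ := Function.ne_iff.mp hu
  simp only [Pi.zero_apply] at hp
  have hpm : p ≤ m := by
    by_contra h
    exact hp (hv p (by omega))
  intro H
  apply hp
  have := congrFun H ⟨m + p, by omega⟩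
  simp only [mkU, Pi.zero_apply] at this
  have e1 : (((⟨m+p, by omega⟩ : Fin (2*m+1)) : ℕ) : ℤ) - (m:ℤ) = (p:ℤ) := by
    simp
  rw [e1] at this
  simp only [Int.natAbs_natCast] at this
  rcases mul_eq_zero.mp this with h | h
  · split at h <;> norm_num at h
  · exact h

lemma mkU_smul_eq (m : ℕ) (c : ℂ) (u u' : ℕ → ℂ)
    (hu : ∀ p, m < p → u p = 0) (hu' : ∀ p, m < p → u' p = 0)
    (h : c • mkU m u = mkU m u') : ∀ p, u' p = c * u p := by
  intro p
  by_cases hpm : p ≤ m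
  · have hq := congrFun h ⟨m + p, by omega⟩
    simp only [mkU, Pi.smul_apply, smul_eq_mul] at hq
    have e1 : (((⟨m+p, by omega⟩ : Fin (2*m+1)) : ℕ) : ℤ) - (m:ℤ) = (p:ℤ) := by
      simp
    rw [e1] at hq
    simp only [Int.natAbs_natCast] at hq
    split at hq
    · linear_combination -hq / 2
    · linear_combination -hq
  · rw [hu p (by omega), hu' p (by omega), mul_zero]

lemma sol_mulVec {k : ℕ} (a : Fin k → ℕ → ℝ) (n : ℕ) (mv : Fin k → ℕ)
    (u : ℕ → ℂ) (v : Fin k → ℕ → ℂ) (h : IsChebSolution a n mv u v) :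
    (chebHMatrix a n mv).mulVec (mkU (∑ i, mv i) u) = 0 := by
  obtain ⟨h0, h1, h2, h3, h4, h5⟩ := h
  set m := ∑ i, mv i with hm
  have hmain : ∀ (j : Fin k) (i : ℕ), i < mv j →
      ∑ p ∈ Finset.range (m+1), u p *
        (chebC a j ((((n + m - mv j : ℕ):ℤ) + 1 + (i:ℤ)) - (p:ℤ)) +
         chebC a j ((((n + m - mv j : ℕ):ℤ) + 1 + (i:ℤ)) + (p:ℤ))) = 0 := by
    intro j i hi
    have hmvj : mv j ≤ m := by
      rw [hm]; exact Finset.single_le_sum (fun i _ => Nat.zero_le _) (Finset.mem_univ j)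
    set l : ℕ := (n + m - mv j) + 1 + i with hl
    have hL : ((l:ℕ):ℤ) = (((n + m - mv j : ℕ):ℤ) + 1 + (i:ℤ)) := by push_cast; omega
    have hz := h2 j l (by omega) (by omega)
    have heq : ∑ p ∈ Finset.range (m+1), u p *
        (chebC a j ((((n + m - mv j : ℕ):ℤ) + 1 + (i:ℤ)) - (p:ℤ)) +
         chebC a j ((((n + m - mv j : ℕ):ℤ) + 1 + (i:ℤ)) + (p:ℤ)))
        = (1/2) * ∑ p ∈ Finset.range (m+1),
            u p * (((a j ((l : ℤ) - p).natAbs : ℝ) : ℂ) + ((a j (l + p) : ℝ) : ℂ)) := by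
      rw [Finset.mul_sum]
      apply Finset.sum_congr rfl
      intro p _
      rw [← hL]
      have e2 : (((l:ℕ):ℤ) + (p:ℤ)).natAbs = l + p := by omega
      simp only [chebC, e2]
      push_cast
      ring
    rw [heq, hz, mul_zero]
  funext r
  rcases r with ⟨j, i⟩ | ⟨j, i⟩ <;>
    simp only [Matrix.mulVec, dotProduct, chebHMatrix, Pi.zero_apply] <;>
    rw [← hm]
  · rw [key_sum]
    exact hmain j i i.isLt
  · have hsym : ∀ x : ℤ, chebC a j (-x) = chebC a j x := by
      intro x; simp only [chebC, Int.natAbs_neg]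
    rw [key_sum_neg _ _ _ _ hsym, key_sum]
    exact hmain j i i.isLt

/-- **Uniqueness of linear Hermite–Chebyshev approximations** (Corollary 6).
If `m⃗ ≠ (0,…,0)` and `(n, m⃗)` is weakly normal for the associated system
(`rank H^t_{n,m⃗} = 2m` with `c^j_l = a^j_{|l|}/2`), then the linear Hermite–Chebyshev
approximations are uniquely determined: for any two solutions `(u, v^1, …, v^k)` and
`(u', v'^1, …, v'^k)` of Problem `A^ch` one has the polynomial identities
`(∑_{p=0}^{n_j} v^j_p T_p)·(∑_{q=0}^m u'_q T_q) = (∑_{p=0}^{n_j} v'^j_p T_p)·(∑_{q=0}^m u_q T_q)`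
for every `j`. -/
theorem cheb_hermite_pade_approx_unique (k : ℕ) (hk : 1 ≤ k) (a : Fin k → ℕ → ℝ)
    (n : ℕ) (mv : Fin k → ℕ) (hmv : mv ≠ 0)
    (hrank : (chebHMatrix a n mv).rank = 2 * ∑ i, mv i) :
    ∀ (u u' : ℕ → ℂ) (v v' : Fin k → ℕ → ℂ),
      IsChebSolution a n mv u v → IsChebSolution a n mv u' v' →
        ∀ j : Fin k,
          (∑ p ∈ Finset.range ((n + (∑ i, mv i) - mv j) + 1),
              Polynomial.C (v j p) * Polynomial.Chebyshev.T ℂ (p : ℤ)) *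
            (∑ q ∈ Finset.range ((∑ i, mv i) + 1),
              Polynomial.C (u' q) * Polynomial.Chebyshev.T ℂ (q : ℤ)) =
          (∑ p ∈ Finset.range ((n + (∑ i, mv i) - mv j) + 1),
              Polynomial.C (v' j p) * Polynomial.Chebyshev.T ℂ (p : ℤ)) *
            (∑ q ∈ Finset.range ((∑ i, mv i) + 1),
              Polynomial.C (u q) * Polynomial.Chebyshev.T ℂ (q : ℤ)) := by
  intro u u' v v' hs hs' j
  have hdim : Module.finrank ℂ
      (LinearMap.ker (chebHMatrix a n mv).mulVecLin) = 1 := by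
    have h := LinearMap.finrank_range_add_finrank_ker (chebHMatrix a n mv).mulVecLin
    have hfr : Module.finrank ℂ (Fin (2 * (∑ i, mv i) + 1) → ℂ) = 2 * (∑ i, mv i) + 1 :=
      Module.finrank_fin_fun ℂ
    have hr : Module.finrank ℂ (LinearMap.range (chebHMatrix a n mv).mulVecLin)
        = 2 * ∑ i, mv i := hrank
    omega
  have hUmem : mkU (∑ i, mv i) u ∈ LinearMap.ker (chebHMatrix a n mv).mulVecLin := by
    rw [LinearMap.mem_ker, Matrix.mulVecLin_apply]
    exact sol_mulVec a n mv u v hs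
  have hU'mem : mkU (∑ i, mv i) u' ∈ LinearMap.ker (chebHMatrix a n mv).mulVecLin := by
    rw [LinearMap.mem_ker, Matrix.mulVecLin_apply]
    exact sol_mulVec a n mv u' v' hs'
  have hUne : mkU (∑ i, mv i) u ≠ 0 := mkU_ne_zero _ u hs.1 hs.2.1
  have hspan : Submodule.span ℂ {mkU (∑ i, mv i) u}
      = LinearMap.ker (chebHMatrix a n mv).mulVecLin := by
    apply Submodule.eq_of_le_of_finrank_le
    · exact (Submodule.span_singleton_le_iff_mem _ _).mpr hUmem
    · rw [hdim, finrank_span_singleton hUne]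
  obtain ⟨c, hc⟩ := Submodule.mem_span_singleton.mp (hspan ▸ hU'mem)
  have hc' : ∀ p, u' p = c * u p := mkU_smul_eq _ c u u' hs.2.1 hs'.2.1 hc
  have hv : ∀ p, p ≤ n + (∑ i, mv i) - mv j → v' j p = c * v j p := by
    intro p hp
    rcases Nat.eq_zero_or_pos p with rfl | hp1
    · rw [hs'.2.2.2.1 j, hs.2.2.2.1 j]
      have hsum : ∑ q ∈ Finset.range ((∑ i, mv i) + 1), u' q * ((a j q : ℝ) : ℂ)
          = c * ∑ q ∈ Finset.range ((∑ i, mv i) + 1), u q * ((a j q : ℝ) : ℂ) := by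
        rw [Finset.mul_sum]
        exact Finset.sum_congr rfl fun q _ => by rw [hc' q]; ring
      rw [hsum]; ring
    · rw [hs'.2.2.2.2.1 j p hp1 hp, hs.2.2.2.2.1 j p hp1 hp]
      have hsum : ∑ q ∈ Finset.range ((∑ i, mv i) + 1),
            u' q * (((a j ((p : ℤ) - q).natAbs : ℝ) : ℂ) + ((a j (p + q) : ℝ) : ℂ))
          = c * ∑ q ∈ Finset.range ((∑ i, mv i) + 1),
            u q * (((a j ((p : ℤ) - q).natAbs : ℝ) : ℂ) + ((a j (p + q) : ℝ) : ℂ)) := by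
        rw [Finset.mul_sum]
        exact Finset.sum_congr rfl fun q _ => by rw [hc' q]; ring
      rw [hsum]; ring
  have hU' : (∑ q ∈ Finset.range ((∑ i, mv i) + 1),
        Polynomial.C (u' q) * Polynomial.Chebyshev.T ℂ (q : ℤ))
      = Polynomial.C c * ∑ q ∈ Finset.range ((∑ i, mv i) + 1),
        Polynomial.C (u q) * Polynomial.Chebyshev.T ℂ (q : ℤ) := by
    rw [Finset.mul_sum]
    exact Finset.sum_congr rfl fun q _ => by rw [hc' q, map_mul]; ring
  have hV' : (∑ p ∈ Finset.range ((n + (∑ i, mv i) - mv j) + 1),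
        Polynomial.C (v' j p) * Polynomial.Chebyshev.T ℂ (p : ℤ))
      = Polynomial.C c * ∑ p ∈ Finset.range ((n + (∑ i, mv i) - mv j) + 1),
        Polynomial.C (v j p) * Polynomial.Chebyshev.T ℂ (p : ℤ) := by
    rw [Finset.mul_sum]
    refine Finset.sum_congr rfl fun p hp => ?_
    have hple : p ≤ n + (∑ i, mv i) - mv j := Nat.lt_succ_iff.mp (Finset.mem_range.mp hp)
    rw [hv p hple, map_mul]; ring
  rw [hU', hV']
  ring
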